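/- Let G = (V,E,η) be a β-balanced lossy flow graph (η_e ∈ [1,1+β]) with smoothed graph Ḡ satisfying 20β ≤ λ₂(N_Ḡ) ≤ 1, let d ∈ ℝ^V satisfy d_G ≤ d ≤ c·d_G for c ≥ 1, D = diag(d), ε ∈ [0,1], and let λ₁ be the smallest eigenvalue of M := D^{−1/2} L_G D^{−1/2} + ε·I with unit eigenvector v_min. Then (λ₂(N_Ḡ)/(2c))·(I − (1 − λ₁)·v_min v_minᵀ) ⪯ M ⪯ 4·(I − (1 − λ₁)·v_min v_minᵀ). In particular λ₂(M) ≥ λ₂(N_Ḡ)/(2c) and λₙ(M) ≤ 4. -/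

import Mathlib

/-!
Write `y = D^{-1/2} x`. Then `xᵀ M x = ∑_e (y_{b e} - η_e y_{a e})² + ε |x|²` and
`|x|² = ∑_v d_v y_v²`. The upper bound follows from `(p - η q)² ≤ 2 (p² + η² q²)`, whose sum
over the edges is `2 ∑_v (d_G)_v y_v² ≤ 2 |x|²`.

For the lower bound, `(p - η q)² ≥ ¾ (p - q)² - 3 β² q²` compares the energy of `y` with its
energy in the smoothed graph `Ḡ`. On the hyperplane where `D_Ḡ^{1/2} y` is orthogonal to the
bottom eigenvector of `N_Ḡ`, the latter is at least `λ₂(N_Ḡ) ∑_v (d_Ḡ)_v y_v²`, and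
`d ≤ c (1 + β)² d_Ḡ`; since `20 β ≤ λ₂(N_Ḡ)`, the loss `3 β²` is absorbed and
`xᵀ M x ≥ λ₂(N_Ḡ)/(2c) |x|²` on that hyperplane. By Courant–Fischer the same bound holds on
`v_min^⊥`. Splitting `x` along `v_min` turns both bounds into the Loewner inequalities.
-/

open Matrix

section QuadraticForm

variable {V : Type*}

lemma isHermitian_one_sub_smul_vecMulVec [DecidableEq V] (μ : ℝ) (v : V → ℝ) :
    (1 - μ • vecMulVec v v).IsHermitian :=
  IsHermitian.ext_iff.mpr fun i j => by simp [vecMulVec_apply, one_apply, eq_comm, mul_comm]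

lemma isHermitian_of_apply_eq_div_add [DecidableEq V] {A L : Matrix V V ℝ}
    (hL : L.IsHermitian) {s : V → ℝ} {ε : ℝ}
    (hA : ∀ u v, A u v = L u v / (s u * s v) + if u = v then ε else 0) : A.IsHermitian :=
  IsHermitian.ext_iff.mpr fun u v => by simp [hA, ← hL.apply u v, mul_comm, eq_comm]

variable [Fintype V]

lemma Matrix.IsHermitian.dotProduct_mulVec_comm {M : Matrix V V ℝ} (hM : M.IsHermitian)
    (x y : V → ℝ) : x ⬝ᵥ M *ᵥ y = y ⬝ᵥ M *ᵥ x := by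
  have hT : Mᵀ = M := isHermitian_iff_isSymm.mp hM
  calc x ⬝ᵥ M *ᵥ y = x ᵥ* Mᵀ ⬝ᵥ y := by rw [hT, dotProduct_mulVec]
    _ = y ⬝ᵥ M *ᵥ x := by rw [vecMul_transpose, dotProduct_comm]

lemma exists_eq_smul_add_of_dotProduct_self_eq_one {v : V → ℝ} (hunit : v ⬝ᵥ v = 1)
    (x : V → ℝ) : ∃ (α : ℝ) (y : V → ℝ), y ⬝ᵥ v = 0 ∧ x = α • v + y :=
  ⟨x ⬝ᵥ v, x - (x ⬝ᵥ v) • v, by simp [sub_dotProduct, hunit], by simp⟩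

lemma dotProduct_self_smul_add_of_dotProduct_eq_zero {v y : V → ℝ} (hyv : y ⬝ᵥ v = 0)
    (α : ℝ) : (α • v + y) ⬝ᵥ (α • v + y) = α ^ 2 * (v ⬝ᵥ v) + y ⬝ᵥ y := by
  simp only [dotProduct_add, add_dotProduct, dotProduct_smul, smul_dotProduct, smul_eq_mul,
    hyv, dotProduct_comm v y]
  ring

lemma dotProduct_mulVec_smul_add_of_eigenvector {M : Matrix V V ℝ} (hM : M.IsHermitian)
    {lam : ℝ} {v y : V → ℝ} (hv : M *ᵥ v = lam • v) (hyv : y ⬝ᵥ v = 0) (α : ℝ) :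
    (α • v + y) ⬝ᵥ M *ᵥ (α • v + y) = α ^ 2 * lam * (v ⬝ᵥ v) + y ⬝ᵥ M *ᵥ y := by
  have hvy : v ⬝ᵥ M *ᵥ y = 0 := by
    rw [hM.dotProduct_mulVec_comm, hv, dotProduct_smul, hyv, smul_zero]
  simp only [mulVec_add, mulVec_smul, hv, dotProduct_add, add_dotProduct, dotProduct_smul,
    smul_dotProduct, smul_eq_mul, hvy, hyv]
  ring

lemma mul_dotProduct_self_le_of_orthogonal_minEigenvector {M : Matrix V V ℝ}
    (hM : M.IsHermitian) {lam : ℝ} {v : V → ℝ} (hv : M *ᵥ v = lam • v) (hunit : v ⬝ᵥ v = 1)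
    (hmin : ∀ x, lam * (x ⬝ᵥ x) ≤ x ⬝ᵥ M *ᵥ x) {t : ℝ} {u : V → ℝ}
    (hu : ∀ z, z ⬝ᵥ u = 0 → t * (z ⬝ᵥ z) ≤ z ⬝ᵥ M *ᵥ z) {y : V → ℝ} (hyv : y ⬝ᵥ v = 0) :
    t * (y ⬝ᵥ y) ≤ y ⬝ᵥ M *ᵥ y := by
  by_contra! hy
  have hyy : 0 < y ⬝ᵥ y := by
    refine (by simpa using dotProduct_star_self_nonneg y : (0 : ℝ) ≤ y ⬝ᵥ y).lt_of_ne
      fun h => ?_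
    rw [← h, dotProduct_self_eq_zero.mp h.symm] at hy
    simp at hy
  have hlam : lam < t := lt_of_mul_lt_mul_right ((hmin y).trans_lt hy) hyy.le
  by_cases hvu : v ⬝ᵥ u = 0
  · have := hu v hvu
    rw [hv, dotProduct_smul, hunit, smul_eq_mul] at this
    linarith
  · -- the plane spanned by `v` and `y` meets the hyperplane `u⊥` in a nonzero vector
    have hz := hu ((y ⬝ᵥ u) • v + (-(v ⬝ᵥ u)) • y) (by
      simp only [add_dotProduct, smul_dotProduct, smul_eq_mul]; ring)
    have hyv' : (-(v ⬝ᵥ u)) • y ⬝ᵥ v = 0 := by rw [smul_dotProduct, hyv, smul_zero]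
    rw [dotProduct_mulVec_smul_add_of_eigenvector hM hv hyv',
      dotProduct_self_smul_add_of_dotProduct_eq_zero hyv', hunit] at hz
    simp only [mulVec_smul, dotProduct_smul, smul_dotProduct, smul_eq_mul] at hz
    have hs : 0 < (v ⬝ᵥ u) ^ 2 := by positivity
    nlinarith [mul_lt_mul_of_pos_left hy hs, sq_nonneg (y ⬝ᵥ u)]

lemma transpose_mulVec_dotProduct_transpose_mulVec {ι : Type*} [Fintype ι] [DecidableEq ι]
    {U : Matrix ι V ℝ} (hU : U * Uᵀ = 1) (x y : ι → ℝ) : Uᵀ *ᵥ x ⬝ᵥ Uᵀ *ᵥ y = x ⬝ᵥ y := by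
  rw [dotProduct_mulVec, vecMul_transpose, mulVec_mulVec, hU, one_mulVec]

lemma dotProduct_self_eq_sum_mul_div_sqrt_sq {d : V → ℝ} (hd : ∀ v, 0 < d v) (x : V → ℝ) :
    x ⬝ᵥ x = ∑ v, d v * (x / (Real.sqrt ∘ d)) v ^ 2 := by
  refine Finset.sum_congr rfl fun v _ => ?_
  rw [Pi.div_apply, Function.comp_apply, div_pow, Real.sq_sqrt (hd v).le]
  field_simp [(hd v).ne']

variable [DecidableEq V]

lemma dotProduct_mulVec_one_sub_smul_vecMulVec (μ : ℝ) (v x : V → ℝ) :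
    x ⬝ᵥ (1 - μ • vecMulVec v v) *ᵥ x = x ⬝ᵥ x - μ * (x ⬝ᵥ v) ^ 2 := by
  simp [sub_mulVec, smul_mulVec, vecMulVec_mulVec, dotProduct_comm v x, sq]

lemma dotProduct_mulVec_one_sub_smul_vecMulVec_smul_add {v y : V → ℝ} (hunit : v ⬝ᵥ v = 1)
    (hyv : y ⬝ᵥ v = 0) (lam α : ℝ) :
    (α • v + y) ⬝ᵥ (1 - (1 - lam) • vecMulVec v v) *ᵥ (α • v + y) = α ^ 2 * lam + y ⬝ᵥ y := by
  rw [dotProduct_mulVec_one_sub_smul_vecMulVec, dotProduct_self_smul_add_of_dotProduct_eq_zero hyv,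
    add_dotProduct, smul_dotProduct, hunit, hyv, smul_eq_mul]
  ring

lemma posSemidef_sub_smul_one_sub_smul_vecMulVec {M : Matrix V V ℝ} (hM : M.IsHermitian)
    {lam : ℝ} {v : V → ℝ} (hv : M *ᵥ v = lam • v) (hunit : v ⬝ᵥ v = 1) (hlam : 0 ≤ lam)
    {t : ℝ} (ht : t ≤ 1) (hperp : ∀ y, y ⬝ᵥ v = 0 → t * (y ⬝ᵥ y) ≤ y ⬝ᵥ M *ᵥ y) :
    (M - t • (1 - (1 - lam) • vecMulVec v v)).PosSemidef := by
  refine .of_dotProduct_mulVec_nonneg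
    (hM.sub ((isHermitian_one_sub_smul_vecMulVec _ v).smul (.all t))) fun x => ?_
  obtain ⟨α, y, hyv, rfl⟩ := exists_eq_smul_add_of_dotProduct_self_eq_one hunit x
  rw [star_trivial, sub_mulVec, smul_mulVec, dotProduct_sub, dotProduct_smul, smul_eq_mul,
    dotProduct_mulVec_one_sub_smul_vecMulVec_smul_add hunit hyv,
    dotProduct_mulVec_smul_add_of_eigenvector hM hv hyv, hunit]
  nlinarith [hperp y hyv, mul_nonneg (mul_nonneg hlam (sub_nonneg.mpr ht)) (sq_nonneg α)]

lemma posSemidef_smul_one_sub_smul_vecMulVec_sub {M : Matrix V V ℝ} (hM : M.IsHermitian)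
    {lam : ℝ} {v : V → ℝ} (hv : M *ᵥ v = lam • v) (hunit : v ⬝ᵥ v = 1) (hlam : 0 ≤ lam)
    {s : ℝ} (hs : 1 ≤ s) (hperp : ∀ y, y ⬝ᵥ v = 0 → y ⬝ᵥ M *ᵥ y ≤ s * (y ⬝ᵥ y)) :
    (s • (1 - (1 - lam) • vecMulVec v v) - M).PosSemidef := by
  refine .of_dotProduct_mulVec_nonneg
    (((isHermitian_one_sub_smul_vecMulVec _ v).smul (.all s)).sub hM) fun x => ?_
  obtain ⟨α, y, hyv, rfl⟩ := exists_eq_smul_add_of_dotProduct_self_eq_one hunit x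
  rw [star_trivial, sub_mulVec, smul_mulVec, dotProduct_sub, dotProduct_smul, smul_eq_mul,
    dotProduct_mulVec_one_sub_smul_vecMulVec_smul_add hunit hyv,
    dotProduct_mulVec_smul_add_of_eigenvector hM hv hyv, hunit]
  nlinarith [hperp y hyv, mul_nonneg (mul_nonneg hlam (sub_nonneg.mpr hs)) (sq_nonneg α)]

lemma mul_dotProduct_self_le_of_orthonormal_eigenvectors {ι : Type*} [Fintype ι] [DecidableEq ι]
    (hcard : Fintype.card ι = Fintype.card V) {A : Matrix V V ℝ} {lam : ι → ℝ}
    {u : ι → V → ℝ} (heig : ∀ i, A *ᵥ u i = lam i • u i)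
    (horth : ∀ i j, u i ⬝ᵥ u j = if i = j then 1 else 0) {t : ℝ} {w : V → ℝ}
    (hw : ∀ i, lam i < t → u i ⬝ᵥ w = 0) : t * (w ⬝ᵥ w) ≤ w ⬝ᵥ A *ᵥ w := by
  set U : Matrix ι V ℝ := of u
  have hU : U * Uᵀ = 1 := by
    ext i j
    rw [mul_apply', one_apply]
    exact horth i j
  have hAU : A * Uᵀ = Uᵀ * diagonal lam := by
    ext v i
    rw [mul_diagonal, mul_apply']
    simpa [U, mulVec, mul_comm] using congrFun (heig i) v
  obtain ⟨c, rfl, hc⟩ : ∃ c, w = Uᵀ *ᵥ c ∧ ∀ i, lam i < t → c i = 0 := by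
    refine ⟨U *ᵥ w, ?_, hw⟩
    rw [mulVec_mulVec, (mul_eq_one_comm_of_equiv (Fintype.equivOfCardEq hcard)).mp hU,
      one_mulVec]
  rw [transpose_mulVec_dotProduct_transpose_mulVec hU, mulVec_mulVec, hAU, ← mulVec_mulVec,
    transpose_mulVec_dotProduct_transpose_mulVec hU, dotProduct, dotProduct, Finset.mul_sum]
  refine Finset.sum_le_sum fun i _ => ?_
  rw [mulVec_diagonal]
  rcases lt_or_ge (lam i) t with h | h
  · simp [hc i h]
  · nlinarith [mul_self_nonneg (c i)]

lemma mul_dotProduct_self_le_of_dotProduct_eigenvector_zero_eq_zero {A : Matrix V V ℝ}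
    {lam : Fin (Fintype.card V) → ℝ} {u : Fin (Fintype.card V) → V → ℝ} (hmono : Monotone lam)
    (heig : ∀ i, A *ᵥ u i = lam i • u i)
    (horth : ∀ i j, u i ⬝ᵥ u j = if i = j then 1 else 0) (h1 : 1 < Fintype.card V)
    {w : V → ℝ} (hw : w ⬝ᵥ u ⟨0, by omega⟩ = 0) : lam ⟨1, h1⟩ * (w ⬝ᵥ w) ≤ w ⬝ᵥ A *ᵥ w :=
  mul_dotProduct_self_le_of_orthonormal_eigenvectors (Fintype.card_fin _) heig horth
    fun i hi => by
      obtain rfl : i = ⟨0, by omega⟩ :=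
        Fin.ext (Nat.lt_one_iff.mp (Fin.lt_def.mp (hmono.reflect_lt hi)))
      rw [dotProduct_comm, hw]

lemma dotProduct_mulVec_eq_of_apply_eq_div_add {A L : Matrix V V ℝ}
    {s : V → ℝ} {ε : ℝ} (hA : ∀ u v, A u v = L u v / (s u * s v) + if u = v then ε else 0)
    (x : V → ℝ) : x ⬝ᵥ A *ᵥ x = (x / s) ⬝ᵥ L *ᵥ (x / s) + ε * (x ⬝ᵥ x) := by
  have hA' : A = diagonal s⁻¹ * L * diagonal s⁻¹ + ε • 1 := by
    ext u v
    simp [hA, one_apply, div_eq_mul_inv]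
    ring
  have hx : x ᵥ* diagonal s⁻¹ = x / s := funext fun v => by
    simp [vecMul_diagonal, div_eq_mul_inv]
  have hx' : diagonal s⁻¹ *ᵥ x = x / s := funext fun v => by
    simp [mulVec_diagonal, div_eq_inv_mul]
  rw [hA', add_mulVec, dotProduct_add, smul_mulVec, one_mulVec, dotProduct_smul, smul_eq_mul,
    ← mulVec_mulVec, ← mulVec_mulVec, hx', dotProduct_mulVec, hx]

lemma mul_sum_mul_sq_le_dotProduct_mulVec_of_normalized {L N : Matrix V V ℝ} (hL : ∀ v, 0 < L v v)
    (hN : ∀ u v, N u v = L u v / (Real.sqrt (L u u) * Real.sqrt (L v v))) {lam : ℝ}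
    {u₀ : V → ℝ} (hgap : ∀ w, w ⬝ᵥ u₀ = 0 → lam * (w ⬝ᵥ w) ≤ w ⬝ᵥ N *ᵥ w) (y : V → ℝ)
    (hy : ((Real.sqrt ∘ L.diag) * y) ⬝ᵥ u₀ = 0) :
    lam * ∑ v, L v v * y v ^ 2 ≤ y ⬝ᵥ L *ᵥ y := by
  set w := (Real.sqrt ∘ L.diag) * y
  have hwy : w / (Real.sqrt ∘ L.diag) = y :=
    funext fun v => mul_div_cancel_left₀ _ (Real.sqrt_pos.mpr (hL v)).ne'
  have := hgap w hy
  rwa [dotProduct_mulVec_eq_of_apply_eq_div_add (s := Real.sqrt ∘ L.diag) (ε := 0)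
    (by simpa using hN) w, dotProduct_self_eq_sum_mul_div_sqrt_sq (d := L.diag) hL, hwy,
    zero_mul, add_zero] at this

end QuadraticForm

section LossyLaplacian

variable {V E : Type*} [DecidableEq V]

def lossyIncidence (a b : E → V) (η : E → ℝ) : Matrix E V ℝ :=
  of fun e v => (if v = b e then 1 else 0) - η e * if v = a e then 1 else 0

def lossyLaplacian [Fintype E] (a b : E → V) (η : E → ℝ) : Matrix V V ℝ :=
  (lossyIncidence a b η)ᵀ * lossyIncidence a b η

variable {a b : E → V} (η : E → ℝ)

lemma isHermitian_lossyLaplacian [Fintype E] : (lossyLaplacian a b η).IsHermitian := by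
  simpa [lossyLaplacian, conjTranspose_eq_transpose_of_trivial] using
    isHermitian_conjTranspose_mul_self (lossyIncidence a b η)

lemma lossyIncidence_mulVec_apply [Fintype V] (x : V → ℝ) (e : E) :
    (lossyIncidence a b η *ᵥ x) e = x (b e) - η e * x (a e) := by
  simp [lossyIncidence, mulVec, dotProduct, sub_mul, Finset.sum_sub_distrib]

variable [Fintype E]

lemma lossyLaplacian_apply_self (hab : ∀ e, a e ≠ b e) (v : V) :
    lossyLaplacian a b η v v =
      ∑ e, ((if v = b e then 1 else 0) + η e ^ 2 * if v = a e then 1 else 0) := by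
  refine Finset.sum_congr rfl fun e _ => ?_
  have := hab e
  simp only [transpose_apply, lossyIncidence, of_apply]
  split_ifs <;> simp_all [sq]

lemma lossyLaplacian_one_apply_self_le (hab : ∀ e, a e ≠ b e) (hη : ∀ e, 1 ≤ η e) (v : V) :
    lossyLaplacian a b 1 v v ≤ lossyLaplacian a b η v v := by
  rw [lossyLaplacian_apply_self _ hab, lossyLaplacian_apply_self _ hab]
  refine Finset.sum_le_sum fun e _ => ?_
  have : 1 ≤ η e ^ 2 := by nlinarith [hη e]
  split_ifs <;> simp [this]

lemma lossyLaplacian_apply_self_le {β : ℝ} (hab : ∀ e, a e ≠ b e)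
    (hη : ∀ e, 1 ≤ η e ∧ η e ≤ 1 + β) (v : V) :
    lossyLaplacian a b η v v ≤ (1 + β) ^ 2 * lossyLaplacian a b 1 v v := by
  rw [lossyLaplacian_apply_self _ hab, lossyLaplacian_apply_self _ hab, Finset.mul_sum]
  refine Finset.sum_le_sum fun e _ => ?_
  obtain ⟨h1, h2⟩ := hη e
  have : η e ^ 2 ≤ (1 + β) ^ 2 := by nlinarith
  split_ifs <;> simp only [Pi.one_apply, one_pow, mul_one, mul_zero, add_zero, zero_add] <;>
    nlinarith

variable [Fintype V]

lemma dotProduct_lossyLaplacian_mulVec (x : V → ℝ) :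
    x ⬝ᵥ lossyLaplacian a b η *ᵥ x = ∑ e, (x (b e) - η e * x (a e)) ^ 2 := by
  rw [lossyLaplacian, ← mulVec_mulVec, dotProduct_mulVec, vecMul_transpose, dotProduct]
  simp only [lossyIncidence_mulVec_apply, sq]

lemma sum_lossyLaplacian_apply_self_mul (hab : ∀ e, a e ≠ b e) (f : V → ℝ) :
    ∑ v, lossyLaplacian a b η v v * f v = ∑ e, (f (b e) + η e ^ 2 * f (a e)) := by
  simp only [lossyLaplacian_apply_self η hab, Finset.sum_mul]
  rw [Finset.sum_comm]
  simp [add_mul, Finset.sum_add_distrib]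

lemma dotProduct_lossyLaplacian_mulVec_le (hab : ∀ e, a e ≠ b e) (x : V → ℝ) :
    x ⬝ᵥ lossyLaplacian a b η *ᵥ x ≤ 2 * ∑ v, lossyLaplacian a b η v v * x v ^ 2 := by
  rw [dotProduct_lossyLaplacian_mulVec, sum_lossyLaplacian_apply_self_mul _ hab, Finset.mul_sum]
  exact Finset.sum_le_sum fun e _ => by nlinarith [sq_nonneg (x (b e) + η e * x (a e))]

lemma dotProduct_lossyLaplacian_one_mulVec_sub_le {β : ℝ} (hab : ∀ e, a e ≠ b e)
    (hη : ∀ e, 1 ≤ η e ∧ η e ≤ 1 + β) (x : V → ℝ) :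
    3 / 4 * (x ⬝ᵥ lossyLaplacian a b 1 *ᵥ x) - 3 * β ^ 2 * ∑ v, lossyLaplacian a b 1 v v * x v ^ 2
      ≤ x ⬝ᵥ lossyLaplacian a b η *ᵥ x := by
  simp only [dotProduct_lossyLaplacian_mulVec, sum_lossyLaplacian_apply_self_mul _ hab,
    Pi.one_apply, one_mul, one_pow, Finset.mul_sum, ← Finset.sum_sub_distrib]
  refine Finset.sum_le_sum fun e _ => ?_
  obtain ⟨h1, h2⟩ := hη e
  have hsq : (η e - 1) ^ 2 * x (a e) ^ 2 ≤ β ^ 2 * x (a e) ^ 2 :=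
    mul_le_mul_of_nonneg_right (by nlinarith) (sq_nonneg _)
  -- `(p - q)² ≥ ¾ p² - 3 q²` with `p = x (b e) - x (a e)` and `q = (η e - 1) x (a e)`
  nlinarith [sq_nonneg ((x (b e) - x (a e)) / 2 - 2 * (η e - 1) * x (a e)), sq_nonneg (x (b e))]

lemma dotProduct_lossyLaplacian_mulVec_div_sqrt_le (hab : ∀ e, a e ≠ b e) {d : V → ℝ}
    (hdpos : ∀ v, 0 < d v) (hd : ∀ v, lossyLaplacian a b η v v ≤ d v) (x : V → ℝ) :
    (x / (Real.sqrt ∘ d)) ⬝ᵥ lossyLaplacian a b η *ᵥ (x / (Real.sqrt ∘ d)) ≤ 2 * (x ⬝ᵥ x) := by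
  refine (dotProduct_lossyLaplacian_mulVec_le η hab _).trans ?_
  rw [dotProduct_self_eq_sum_mul_div_sqrt_sq hdpos x]
  gcongr with v
  exact hd v

lemma mul_sum_mul_sq_le_dotProduct_lossyLaplacian_mulVec {β lam c : ℝ} {d : V → ℝ}
    (hab : ∀ e, a e ≠ b e) (hη : ∀ e, 1 ≤ η e ∧ η e ≤ 1 + β) (hβ : 0 ≤ β)
    (hlow : 20 * β ≤ lam) (hup : lam ≤ 1) (hc : 1 ≤ c)
    (hd : ∀ v, d v ≤ c * lossyLaplacian a b η v v) (x : V → ℝ)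
    (hgap : lam * ∑ v, lossyLaplacian a b 1 v v * x v ^ 2 ≤ x ⬝ᵥ lossyLaplacian a b 1 *ᵥ x) :
    lam / (2 * c) * ∑ v, d v * x v ^ 2 ≤ x ⬝ᵥ lossyLaplacian a b η *ᵥ x := by
  set S := ∑ v, lossyLaplacian a b 1 v v * x v ^ 2
  have hS : 0 ≤ S := by
    simp only [S, sum_lossyLaplacian_apply_self_mul _ hab]
    positivity
  have hdS : ∑ v, d v * x v ^ 2 ≤ c * (1 + β) ^ 2 * S := by
    rw [Finset.mul_sum]
    refine Finset.sum_le_sum fun v _ => ?_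
    calc d v * x v ^ 2 ≤ c * lossyLaplacian a b η v v * x v ^ 2 := by gcongr; exact hd v
      _ ≤ c * ((1 + β) ^ 2 * lossyLaplacian a b 1 v v) * x v ^ 2 := by
        gcongr
        exact lossyLaplacian_apply_self_le η hab hη v
      _ = _ := by ring
  have hnum : lam * (1 + β) ^ 2 / 2 ≤ 3 / 4 * lam - 3 * β ^ 2 := by
    nlinarith [mul_le_mul_of_nonneg_left hlow hβ, mul_le_mul_of_nonneg_left hup (sq_nonneg β)]
  calc lam / (2 * c) * ∑ v, d v * x v ^ 2 ≤ lam / (2 * c) * (c * (1 + β) ^ 2 * S) := by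
        gcongr
        exact div_nonneg (by linarith) (by linarith)
    _ = lam * (1 + β) ^ 2 / 2 * S := by field_simp
    _ ≤ (3 / 4 * lam - 3 * β ^ 2) * S := by gcongr
    _ ≤ x ⬝ᵥ lossyLaplacian a b η *ᵥ x := by
      nlinarith [dotProduct_lossyLaplacian_one_mulVec_sub_le η hab hη x]

end LossyLaplacian

/-- Let `G` be a `β`-balanced lossy flow graph whose smoothed graph `Ḡ`
has normalized Laplacian `N_Ḡ` with second-smallest eigenvalue `lam2` satisfying
`20β ≤ lam2 ≤ 1`; let `d_G ≤ d ≤ c·d_G` (`c ≥ 1`), `ε ∈ [0,1]`, and let `lam1` be the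
smallest eigenvalue of `M = D^{-1/2}L_G D^{-1/2} + ε·I` with unit eigenvector `vmin`.
Then `(lam2/(2c))·(I-(1-lam1)·vminvminᵀ) ⪯ M ⪯ 4·(I-(1-lam1)·vminvminᵀ)`.
In particular `λ₂(M) ≥ lam2/(2c)` (as a Rayleigh bound on the orthogonal complement of
`vmin`) and `λₙ(M) ≤ 4`. -/
theorem stmt_8 {V E : Type*} [Fintype V] [Fintype E] [DecidableEq V]
    (a b : E → V) (hab : ∀ e, a e ≠ b e)
    (β : ℝ) (hβ0 : 0 ≤ β)
    (η : E → ℝ) (hη : ∀ e, 1 ≤ η e ∧ η e ≤ 1 + β)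
    (BG BS : Matrix E V ℝ)
    (hBG : ∀ e v, BG e v = (if v = b e then 1 else 0) - η e * (if v = a e then 1 else 0))
    (hBS : ∀ e v, BS e v = (if v = b e then 1 else 0) - (if v = a e then 1 else 0))
    (LG LS : Matrix V V ℝ) (hLG : LG = BGᵀ * BG) (hLS : LS = BSᵀ * BS)
    (hdSpos : ∀ v, 0 < LS v v)
    (NS : Matrix V V ℝ)
    (hNS : ∀ u v, NS u v = LS u v / (Real.sqrt (LS u u) * Real.sqrt (LS v v)))
    (hcard : 2 ≤ Fintype.card V)
    (lamS : Fin (Fintype.card V) → ℝ) (uS : Fin (Fintype.card V) → V → ℝ)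
    (hmonoS : Monotone lamS)
    (heigS : ∀ i, NS.mulVec (uS i) = lamS i • uS i)
    (horthS : ∀ i j, uS i ⬝ᵥ uS j = if i = j then (1 : ℝ) else 0)
    (lam2 : ℝ) (hlam2 : lam2 = lamS ⟨1, by omega⟩)
    (hlow : 20 * β ≤ lam2) (hup : lam2 ≤ 1)
    (c : ℝ) (hc : 1 ≤ c)
    (d : V → ℝ) (hd : ∀ u, LG u u ≤ d u ∧ d u ≤ c * LG u u)
    (ε : ℝ) (hε0 : 0 ≤ ε) (hε1 : ε ≤ 1)
    (M : Matrix V V ℝ)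
    (hM : ∀ u v, M u v = LG u v / (Real.sqrt (d u) * Real.sqrt (d v)) +
      (if u = v then ε else 0))
    (lam1 : ℝ) (vmin : V → ℝ)
    (heigmin : M.mulVec vmin = lam1 • vmin) (hunit : vmin ⬝ᵥ vmin = 1)
    (hmin : ∀ x : V → ℝ, lam1 * (x ⬝ᵥ x) ≤ x ⬝ᵥ M.mulVec x) :
    (M - (lam2 / (2 * c)) • ((1 : Matrix V V ℝ) - (1 - lam1) • vecMulVec vmin vmin)).PosSemidef ∧
    ((4 : ℝ) • ((1 : Matrix V V ℝ) - (1 - lam1) • vecMulVec vmin vmin) - M).PosSemidef ∧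
    (∀ x : V → ℝ, x ⬝ᵥ vmin = 0 → (lam2 / (2 * c)) * (x ⬝ᵥ x) ≤ x ⬝ᵥ M.mulVec x) ∧
    (∀ x : V → ℝ, x ⬝ᵥ M.mulVec x ≤ 4 * (x ⬝ᵥ x)) := by
  obtain rfl : LG = lossyLaplacian a b η := by
    rw [hLG, show BG = lossyIncidence a b η from ext hBG]; rfl
  obtain rfl : LS = lossyLaplacian a b 1 := by
    rw [hLS, show BS = lossyIncidence a b 1 from ext fun e v => by simp [hBS, lossyIncidence]]
    rfl
  have hdpos : ∀ v, 0 < d v := fun v => (hdSpos v).trans_le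
    ((lossyLaplacian_one_apply_self_le η hab (fun e => (hη e).1) v).trans (hd v).1)
  have hherm : M.IsHermitian := isHermitian_of_apply_eq_div_add (isHermitian_lossyLaplacian η) hM
  have hquad : ∀ x, x ⬝ᵥ M *ᵥ x =
      (x / (Real.sqrt ∘ d)) ⬝ᵥ lossyLaplacian a b η *ᵥ (x / (Real.sqrt ∘ d)) + ε * (x ⬝ᵥ x) :=
    dotProduct_mulVec_eq_of_apply_eq_div_add (s := Real.sqrt ∘ d) hM
  have hnn : ∀ x : V → ℝ, 0 ≤ x ⬝ᵥ x := fun x => by simpa using dotProduct_star_self_nonneg x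
  have hupper : ∀ x, x ⬝ᵥ M *ᵥ x ≤ 4 * (x ⬝ᵥ x) := fun x => by
    nlinarith [hquad x, hnn x, dotProduct_lossyLaplacian_mulVec_div_sqrt_le η hab hdpos
      (fun v => (hd v).1) x]
  have hgapS : ∀ w, w ⬝ᵥ uS ⟨0, by omega⟩ = 0 → lam2 * (w ⬝ᵥ w) ≤ w ⬝ᵥ NS *ᵥ w := fun w hw =>
    hlam2 ▸ mul_dotProduct_self_le_of_dotProduct_eigenvector_zero_eq_zero hmonoS heigS horthS
      (by omega) hw
  have hhyper : ∀ x, x ⬝ᵥ ((Real.sqrt ∘ (lossyLaplacian a b 1).diag) / (Real.sqrt ∘ d) *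
      uS ⟨0, by omega⟩) = 0 → lam2 / (2 * c) * (x ⬝ᵥ x) ≤ x ⬝ᵥ M *ᵥ x := by
    intro x hx
    have hgap := mul_sum_mul_sq_le_dotProduct_mulVec_of_normalized hdSpos hNS hgapS
      (x / (Real.sqrt ∘ d)) (by rw [← hx]; exact Finset.sum_congr rfl fun v _ => by simp; ring)
    rw [dotProduct_self_eq_sum_mul_div_sqrt_sq hdpos x, hquad]
    exact le_add_of_le_of_nonneg (mul_sum_mul_sq_le_dotProduct_lossyLaplacian_mulVec η hab hη
      hβ0 hlow hup hc (fun v => (hd v).2) _ hgap) (mul_nonneg hε0 (hnn x))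
  have hlower := fun x => mul_dotProduct_self_le_of_orthogonal_minEigenvector hherm heigmin
    hunit hmin hhyper (y := x)
  have hlam1 : 0 ≤ lam1 := by
    have := hquad vmin
    rw [heigmin, dotProduct_smul, hunit, smul_eq_mul, mul_one,
      dotProduct_lossyLaplacian_mulVec] at this
    rw [this]
    exact add_nonneg (by positivity) (mul_nonneg hε0 zero_le_one)
  have ht : lam2 / (2 * c) ≤ 1 := by
    rw [div_le_one (by linarith)]; linarith
  exact ⟨posSemidef_sub_smul_one_sub_smul_vecMulVec hherm heigmin hunit hlam1 ht hlower,
    posSemidef_smul_one_sub_smul_vecMulVec_sub hherm heigmin hunit hlam1 (by norm_num)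
      fun y _ => hupper y, hlower, hupper⟩
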